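/- arXiv:0910.0936 — 2 statements merged into one kernel-verified Lean document; each statement's English description precedes it below -/
import Mathlib

section
/- Let h_n(f) = (n/2) Σ_{l∈𝓝} w_{n,l} θ_l² with extremal weights w_{n,l} = v_{l,n}²/u_n, where {v_{l,n}} is the extremal sequence of the extremal problem with b = B = 1 and u_n its value. Then inf_{f∈𝓕(r_n)} h_n(f) = u_n. (Lemma 8.2.) -/
/- The extremal sequence satisfies `v_l⁴ = z₀² (1 - (c_l/C)²) v_l²` exactly, while
`z₀² (1 - (c_l/C)²) ≤ v_l²` for every `l`. Summing against `θ_l²` and using the two constraints on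
`θ` gives `Σ v_l² θ_l² ≥ z₀² (r² - 1/C²)`, and the same computation with `θ = v` shows that
`n z₀² (r² - 1/C²) = Σ v_l⁴ = 2 u²`. Hence `h_n(θ) = (n / 2u) Σ v_l² θ_l² ≥ u`, with equality
at `θ = v / √n`. -/

namespace ExtremalSequence

variable {ι : Type*} {c v : ι → ℝ} {z₀ C : ℝ}

theorem tsum_profile_mul {θ : ι → ℝ} (hθ : Summable fun l => θ l ^ 2)
    (hcθ : Summable fun l => c l ^ 2 * θ l ^ 2) :
    ∑' l, z₀ ^ 2 * (1 - (c l / C) ^ 2) * θ l ^ 2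
      = z₀ ^ 2 * (∑' l, θ l ^ 2 - (∑' l, c l ^ 2 * θ l ^ 2) / C ^ 2) := by
  rw [← tsum_div_const, ← hθ.tsum_sub (hcθ.div_const _), ← tsum_mul_left]
  congr 1 with l
  ring

variable (hv : ∀ l, v l ^ 2 = z₀ ^ 2 * max (1 - (c l / C) ^ 2) 0)
include hv

theorem sq_eq_zero_of_le (hC : 0 < C) {l : ι} (hl : C ≤ c l) : v l ^ 2 = 0 := by
  have : 1 ≤ c l / C := (one_le_div hC).2 hl
  rw [hv, max_eq_right (by nlinarith)]
  ring

theorem summable_mul_sq (hC : 0 < C) (hfin : {l | c l < C}.Finite) (f : ι → ℝ) :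
    Summable fun l => f l * v l ^ 2 := by
  refine summable_of_hasFiniteSupport (hfin.subset fun l hl => ?_)
  by_contra hcl
  exact hl (show f l * v l ^ 2 = 0 by rw [sq_eq_zero_of_le hv hC (not_lt.1 hcl), mul_zero])

theorem profile_mul_le {l : ι} {t : ℝ} (ht : 0 ≤ t) :
    z₀ ^ 2 * (1 - (c l / C) ^ 2) * t ≤ v l ^ 2 * t := by
  rw [hv]
  gcongr
  exact le_max_left _ _

theorem pow_four_eq (l : ι) : v l ^ 4 = z₀ ^ 2 * (1 - (c l / C) ^ 2) * v l ^ 2 := by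
  have hmax (a : ℝ) : max a 0 * max a 0 = a * max a 0 := by
    rcases le_total a 0 with ha | ha <;> simp [ha]
  rw [show v l ^ 4 = v l ^ 2 * v l ^ 2 by ring, hv]
  linear_combination z₀ ^ 4 * hmax (1 - (c l / C) ^ 2)

variable (hC : 0 < C) (hfin : {l | c l < C}.Finite)
include hC hfin

theorem tsum_pow_four_eq :
    ∑' l, v l ^ 4 = z₀ ^ 2 * (∑' l, v l ^ 2 - (∑' l, c l ^ 2 * v l ^ 2) / C ^ 2) := by
  rw [← tsum_profile_mul (by simpa using summable_mul_sq hv hC hfin 1)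
    (summable_mul_sq hv hC hfin _)]
  exact tsum_congr (pow_four_eq hv)

theorem le_tsum_sq_mul_sq {θ : ι → ℝ} (hθ : Summable fun l => θ l ^ 2)
    (hcθ : Summable fun l => c l ^ 2 * θ l ^ 2) :
    z₀ ^ 2 * (∑' l, θ l ^ 2 - (∑' l, c l ^ 2 * θ l ^ 2) / C ^ 2) ≤ ∑' l, v l ^ 2 * θ l ^ 2 := by
  rw [← tsum_profile_mul hθ hcθ]
  refine Summable.tsum_le_tsum (fun l => profile_mul_le hv (sq_nonneg _)) ?_ ?_
  · refine ((hθ.mul_left (z₀ ^ 2)).sub (hcθ.mul_left (z₀ ^ 2 / C ^ 2))).congr fun l => ?_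
    ring
  · simpa [mul_comm] using summable_mul_sq hv hC hfin fun l => θ l ^ 2

theorem le_mul_tsum_sq_mul_sq {m r u : ℝ} (hm : 0 ≤ m) (hu : 0 < u)
    (hmu : m * (z₀ ^ 2 * (r ^ 2 - 1 / C ^ 2)) = 2 * u ^ 2) {θ : ι → ℝ}
    (hθ : Summable fun l => θ l ^ 2) (hcθ : Summable fun l => c l ^ 2 * θ l ^ 2)
    (hcθ_le : ∑' l, c l ^ 2 * θ l ^ 2 ≤ 1) (hθ_ge : r ^ 2 ≤ ∑' l, θ l ^ 2) :
    u ≤ m / (2 * u) * ∑' l, v l ^ 2 * θ l ^ 2 := by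
  have hlow : z₀ ^ 2 * (r ^ 2 - 1 / C ^ 2) ≤ ∑' l, v l ^ 2 * θ l ^ 2 :=
    calc z₀ ^ 2 * (r ^ 2 - 1 / C ^ 2)
        ≤ z₀ ^ 2 * (∑' l, θ l ^ 2 - (∑' l, c l ^ 2 * θ l ^ 2) / C ^ 2) := by gcongr
      _ ≤ _ := le_tsum_sq_mul_sq hv hC hfin hθ hcθ
  rw [div_mul_eq_mul_div, le_div_iff₀ (by positivity)]
  nlinarith [mul_le_mul_of_nonneg_left hlow hm]

end ExtremalSequence

open ExtremalSequence

theorem stmt16_general {ι : Type*} (c : ι → ℝ)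
    (hA1 : ∀ C : ℝ, 0 < C → {l | c l < C}.Finite)
    (n : ℕ) (r : ℝ)
    (z₀ C : ℝ) (hC : 0 < C)
    (v : ι → ℝ) (hvval : ∀ l, (v l) ^ 2 = z₀ ^ 2 * max (1 - (c l / C) ^ 2) 0)
    (hcon1 : ∑' l, (v l) ^ 2 = (n : ℝ) * r ^ 2)
    (hcon2 : ∑' l, (c l) ^ 2 * (v l) ^ 2 = (n : ℝ))
    (u : ℝ) (hu : 0 < u) (huval : u ^ 2 = (1 / 2 : ℝ) * ∑' l, (v l) ^ 4)
    (w : ι → ℝ) (hw : ∀ l, w l = (v l) ^ 2 / u) :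
    sInf {x : ℝ | ∃ θ : ι → ℝ,
        Summable (fun l => (θ l) ^ 2) ∧
        Summable (fun l => (c l) ^ 2 * (θ l) ^ 2) ∧
        ∑' l, (c l) ^ 2 * (θ l) ^ 2 ≤ 1 ∧
        r ^ 2 ≤ ∑' l, (θ l) ^ 2 ∧
        x = ((n : ℝ) / 2) * ∑' l, w l * (θ l) ^ 2} = u := by
  have hfin := hA1 C hC
  have hsum := summable_mul_sq hvval hC hfin
  have htsum_pow_four : ∑' l, v l ^ 4 = 2 * u ^ 2 := by linarith
  have hnu : (n : ℝ) * (z₀ ^ 2 * (r ^ 2 - 1 / C ^ 2)) = 2 * u ^ 2 := by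
    rw [← htsum_pow_four, tsum_pow_four_eq hvval hC hfin, hcon1, hcon2]
    ring
  have hn : (0 : ℝ) < n := by
    refine (Nat.cast_nonneg n).lt_of_ne fun h => ?_
    rw [← h, zero_mul] at hnu
    nlinarith
  have hwθ (θ : ι → ℝ) :
      (n : ℝ) / 2 * ∑' l, w l * θ l ^ 2 = n / (2 * u) * ∑' l, v l ^ 2 * θ l ^ 2 := by
    simp_rw [hw, div_mul_eq_mul_div, tsum_div_const]
    field_simp
  have hsq (l : ι) : (v l / √n) ^ 2 = v l ^ 2 / n := by rw [div_pow, Real.sq_sqrt hn.le]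
  refine IsLeast.csInf_eq ⟨⟨fun l => v l / √n, ?_, ?_, ?_, ?_, ?_⟩, ?_⟩
  · simp_rw [hsq]
    simpa using (hsum 1).div_const (n : ℝ)
  · simp_rw [hsq, mul_div_assoc']
    exact (hsum _).div_const _
  · simp_rw [hsq, mul_div_assoc']
    rw [tsum_div_const, hcon2, div_self hn.ne']
  · simp_rw [hsq]
    rw [tsum_div_const, hcon1, mul_div_cancel_left₀ _ hn.ne']
  · rw [hwθ]
    have hv4 (l : ι) : v l ^ 2 * (v l / √n) ^ 2 = v l ^ 4 / n := by rw [hsq]; ring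
    rw [tsum_congr hv4, tsum_div_const, htsum_pow_four]
    field_simp
  · rintro x ⟨θ, hθ, hcθ, hcθ_le, hθ_ge, rfl⟩
    rw [hwθ]
    exact le_mul_tsum_sq_mul_sq hvval hC hfin hn.le hu hnu hθ hcθ hcθ_le hθ_ge

theorem stmt16 {ι : Type*} [Countable ι] (c : ι → ℝ) (hc : ∀ l, 0 ≤ c l)
    (hA1 : ∀ C : ℝ, 0 < C → {l | c l < C}.Finite)
    (n : ℕ) (r : ℝ) (hr : 0 < r)
    (z₀ C : ℝ) (hz₀ : 0 < z₀) (hC : 0 < C)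
    (v : ι → ℝ) (hvval : ∀ l, (v l) ^ 2 = z₀ ^ 2 * max (1 - (c l / C) ^ 2) 0)
    (hcon1 : ∑' l, (v l) ^ 2 = (n : ℝ) * r ^ 2)
    (hcon2 : ∑' l, (c l) ^ 2 * (v l) ^ 2 = (n : ℝ))
    (u : ℝ) (hu : 0 < u) (huval : u ^ 2 = (1 / 2 : ℝ) * ∑' l, (v l) ^ 4)
    (w : ι → ℝ) (hw : ∀ l, w l = (v l) ^ 2 / u) :
    sInf {x : ℝ | ∃ θ : ι → ℝ,
        Summable (fun l => (θ l) ^ 2) ∧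
        Summable (fun l => (c l) ^ 2 * (θ l) ^ 2) ∧
        ∑' l, (c l) ^ 2 * (θ l) ^ 2 ≤ 1 ∧
        r ^ 2 ≤ ∑' l, (θ l) ^ 2 ∧
        x = ((n : ℝ) / 2) * ∑' l, w l * (θ l) ^ 2} = u :=
  stmt16_general c hA1 n r z₀ C hC v hvval hcon1 hcon2 u hu huval w hw
end

section
/- Let σ > 1/2 and s > 1/2, and for l ∈ ℤ^∞_* with l ≠ 0 set c_l = Π_{j∈ℕ: l_j≠0} j^s |2π l_j|^σ, c_0 = 1, and J(l) = #{j : l_j ≠ 0}. Then Σ_{l∈ℤ^∞_*} 2^{J(l)} c_l^{-2} = Π_{j∈ℕ} (1 + 2 j^{-2s} Σ_{k∈ℤ∖{0}} |2πk|^{-2σ}) < ∞. (Summability verification for the Sloan–Woźniakowski norm, Section 6.5.) -/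
open scoped BigOperators

noncomputable section

/-- J(l) = #{j : l_j ≠ 0}, for l ∈ ℤ^∞_* (finitely supported integer
sequences; the index j ∈ ℕ = {1,2,…} is encoded as j+1 for j : ℕ). -/
def Jnum (l : ℕ →₀ ℤ) : ℕ := l.support.card

/-- The Sloan–Woźniakowski coefficients c_l = Π_{j : l_j ≠ 0} j^s |2π l_j|^σ
(with c_0 = 1 as an empty product); the natural index j ∈ {1,2,…} corresponds
to j+1 for j : ℕ. -/
def cSW (σ s : ℝ) (l : ℕ →₀ ℤ) : ℝ :=
  ∏ j ∈ l.support, (((j : ℝ) + 1) ^ s * |2 * Real.pi * (l j : ℝ)| ^ σ)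

/-! The summand is `l.prod f` with `f j k = 2 (j+1)^(-2s) |2πk|^(-2σ)`, so the sum over finitely
supported `l` is the expanded Euler product `∏ j, (1 + b j)` with `b j = ∑_{k ≠ 0} f j k`. Over the
`l` supported in a finite set `A` the sum factors as `∏ j ∈ A, (1 + b j)`, one coordinate at a time.
These partial sums are bounded by `exp (∑ b j)`, which gives summability, and letting `A` exhaust
the indices (dominated convergence) identifies the full sum with the infinite product. -/

open Finset Filter

theorem HasSum.ite_eq_zero {M α : Type*} [Zero M] [AddCommMonoid α] [TopologicalSpace α]
    [ContinuousAdd α] [DecidableEq M] {f : M → α} {a b : α}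
    (h : HasSum (fun k : {k : M // k ≠ 0} => f k) b) :
    HasSum (fun k => if k = 0 then a else f k) (a + b) := by
  have h' := (hasSum_subtype_iff_indicator (s := {k : M | k ≠ 0}) (f := f)).1 h
  convert (hasSum_ite_eq 0 a).add h' using 1
  funext k
  by_cases hk : k = 0 <;> simp [hk]

namespace Finsupp

variable {ι M : Type*} [Zero M]

def supportSubsetInsertEquiv [DecidableEq ι] {j : ι} {A : Finset ι} (hj : j ∉ A) :
    {l : ι →₀ M // l.support ⊆ insert j A} ≃ M × {l : ι →₀ M // l.support ⊆ A} where
  toFun l := (l.1 j, ⟨l.1.erase j, by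
    rw [support_erase]
    exact (Finset.erase_subset_erase j l.2).trans (erase_insert hj).le⟩)
  invFun p := ⟨p.2.1.update j p.1,
    (support_update_subset _ _).trans (insert_subset_insert _ p.2.2)⟩
  left_inv l := Subtype.ext <| by simp only [update_erase_eq_update, update_self]
  right_inv p := by
    have hjp : j ∉ p.2.1.support := fun h => hj (p.2.2 h)
    refine Prod.ext (by simp) (Subtype.ext ?_)
    simp only [erase_update_eq_erase, erase_of_notMem_support hjp]

variable {f : ι → M → ℝ}

theorem hasSum_prod_of_support_subset {a : ι → ℝ} (hf0 : ∀ i, f i 0 = 1)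
    (hf : ∀ i k, 0 ≤ f i k) (ha : ∀ i, HasSum (f i) (a i)) (A : Finset ι) :
    HasSum (fun l : {l : ι →₀ M // l.support ⊆ A} => l.1.prod f) (∏ i ∈ A, a i) := by
  classical
  induction A using Finset.induction_on with
  | empty =>
    have hzero : ∀ l : {l : ι →₀ M // l.support ⊆ ∅}, l = ⟨0, support_zero.le⟩ := fun l =>
      Subtype.ext (support_eq_empty.1 (Finset.subset_empty.1 l.2))
    convert hasSum_single (⟨0, support_zero.le⟩ : {l : ι →₀ M // l.support ⊆ ∅})
      fun l hl => absurd (hzero l) hl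
    simp
  | @insert j A hj ih =>
    have hsum : Summable fun p : M × {l : ι →₀ M // l.support ⊆ A} => f j p.1 * p.2.1.prod f :=
      (ha j).summable.mul_of_nonneg ih.summable (hf j) fun l => prod_nonneg fun i _ => hf i _
    have hprod : HasSum (fun p : M × {l : ι →₀ M // l.support ⊆ A} => f j p.1 * p.2.1.prod f)
        (a j * ∏ i ∈ A, a i) :=
      HasSum.mul (f := f j) (g := fun l : {l : ι →₀ M // l.support ⊆ A} => l.1.prod f)
        (ha j) ih hsum
    rw [prod_insert hj]
    convert (supportSubsetInsertEquiv hj).hasSum_iff.2 hprod using 1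
    funext l
    exact (mul_prod_erase' l.1 j f hf0).symm

theorem hasSum_indicator_prod_of_support_subset {a : ι → ℝ} (hf0 : ∀ i, f i 0 = 1)
    (hf : ∀ i k, 0 ≤ f i k) (ha : ∀ i, HasSum (f i) (a i)) (A : Finset ι) :
    HasSum ({l : ι →₀ M | l.support ⊆ A}.indicator (·.prod f)) (∏ i ∈ A, a i) :=
  (hasSum_subtype_iff_indicator (s := {l : ι →₀ M | l.support ⊆ A})
    (f := fun l : ι →₀ M => l.prod f)).1 (hasSum_prod_of_support_subset hf0 hf ha A)

variable {b : ι → ℝ}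

theorem summable_prod_of_hasSum_one_add (hf0 : ∀ i, f i 0 = 1) (hf : ∀ i k, 0 ≤ f i k)
    (ha : ∀ i, HasSum (f i) (1 + b i)) (hb0 : ∀ i, 0 ≤ b i) (hb : Summable b) :
    Summable fun l : ι →₀ M => l.prod f := by
  classical
  refine summable_of_sum_le (c := Real.exp (∑' i, b i))
    (fun l => prod_nonneg fun i _ => hf i _) fun u => ?_
  set A := u.biUnion support
  have hA := hasSum_indicator_prod_of_support_subset hf0 hf ha A
  calc ∑ l ∈ u, l.prod f = ∑ l ∈ u, {l : ι →₀ M | l.support ⊆ A}.indicator (·.prod f) l :=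
        Finset.sum_congr rfl fun l hl => (Set.indicator_of_mem
          (s := {l : ι →₀ M | l.support ⊆ A}) (subset_biUnion_of_mem support hl) (·.prod f)).symm
    _ ≤ ∏ i ∈ A, (1 + b i) :=
        sum_le_hasSum u (fun l _ => Set.indicator_nonneg
          (fun l _ => prod_nonneg fun i _ => hf i _) l) hA
    _ ≤ Real.exp (∑ i ∈ A, b i) := Real.prod_one_add_le_exp_sum A hb0
    _ ≤ Real.exp (∑' i, b i) := Real.exp_le_exp.2 (hb.sum_le_tsum A fun i _ => hb0 i)

theorem hasProd_one_add_tsum_prod (hf0 : ∀ i, f i 0 = 1) (hf : ∀ i k, 0 ≤ f i k)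
    (ha : ∀ i, HasSum (f i) (1 + b i)) (hb0 : ∀ i, 0 ≤ b i) (hb : Summable b) :
    HasProd (fun i => 1 + b i) (∑' l : ι →₀ M, l.prod f) := by
  have hpartial : ∀ A : Finset ι, ∏ i ∈ A, (1 + b i) =
      ∑' l, {l : ι →₀ M | l.support ⊆ A}.indicator (·.prod f) l := fun A =>
    (hasSum_indicator_prod_of_support_subset hf0 hf ha A).tsum_eq.symm
  simp only [HasProd, hpartial]
  refine tendsto_tsum_of_dominated_convergence (summable_prod_of_hasSum_one_add hf0 hf ha hb0 hb)
    (fun l => ?_) (Eventually.of_forall fun A l => ?_)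
  · exact tendsto_const_nhds.congr' <|
      (eventually_ge_atTop l.support).mono fun A hA => (Set.indicator_of_mem hA _).symm
  · exact (norm_indicator_le_norm_self _ _).trans
      (Real.norm_of_nonneg (prod_nonneg fun i _ => hf i _)).le

theorem hasSum_prod_tprod_one_add (hf : ∀ i k, 0 ≤ f i k)
    (hb : ∀ i, HasSum (fun k : {k : M // k ≠ 0} => f i k) (b i)) (hbs : Summable b) :
    HasSum (fun l : ι →₀ M => l.prod f) (∏' i, (1 + b i)) := by
  classical
  set g : ι → M → ℝ := fun i k => if k = 0 then 1 else f i k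
  have hfg : ∀ l : ι →₀ M, l.prod f = l.prod g := fun l =>
    prod_congr fun i hi => (if_neg (mem_support_iff.1 hi)).symm
  have hg0 : ∀ i, g i 0 = 1 := fun i => if_pos rfl
  have hg : ∀ i k, 0 ≤ g i k := fun i k => by
    by_cases hk : k = 0 <;> simp [g, hk, hf i k]
  have hga : ∀ i, HasSum (g i) (1 + b i) := fun i => (hb i).ite_eq_zero
  have hb0 : ∀ i, 0 ≤ b i := fun i => (hb i).nonneg fun k : {k : M // k ≠ 0} => hf i k
  simp only [hfg]
  rw [(hasProd_one_add_tsum_prod hg0 hg hga hb0 hbs).tprod_eq]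
  exact (summable_prod_of_hasSum_one_add hg0 hg hga hb0 hbs).hasSum

end Finsupp

theorem Real.inv_sq_rpow {x : ℝ} (hx : 0 ≤ x) (r : ℝ) : ((x ^ r) ^ 2)⁻¹ = x ^ (-(2 * r)) := by
  rw [← Real.rpow_natCast, ← Real.rpow_mul hx, ← Real.rpow_neg hx, Nat.cast_ofNat, mul_comm]

theorem two_pow_Jnum_mul_inv_cSW_sq (σ s : ℝ) (l : ℕ →₀ ℤ) :
    (2 : ℝ) ^ Jnum l * ((cSW σ s l) ^ 2)⁻¹ =
      l.prod fun j k => 2 * ((j : ℝ) + 1) ^ (-(2 * s)) * |2 * Real.pi * (k : ℝ)| ^ (-(2 * σ)) := by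
  rw [Jnum, cSW, Finsupp.prod, ← prod_const, ← prod_pow, ← prod_inv_distrib, ← prod_mul_distrib]
  refine prod_congr rfl fun j _ => ?_
  rw [mul_pow, mul_inv, Real.inv_sq_rpow (by positivity), Real.inv_sq_rpow (abs_nonneg _)]
  ring

theorem summable_abs_two_pi_mul_int_rpow {σ : ℝ} (hσ : 1 / 2 < σ) :
    Summable fun k : ℤ => |2 * Real.pi * (k : ℝ)| ^ (-(2 * σ)) := by
  simp_rw [abs_mul (2 * Real.pi), Real.mul_rpow (abs_nonneg _) (abs_nonneg _)]
  exact (Real.summable_abs_int_rpow (by linarith)).mul_left _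

theorem summable_nat_add_one_rpow {p : ℝ} (hp : p < -1) :
    Summable fun j : ℕ => ((j : ℝ) + 1) ^ p :=
  mod_cast (summable_nat_add_iff 1).2 (Real.summable_nat_rpow.2 hp)

theorem stmt19 (σ s : ℝ) (hσ : 1 / 2 < σ) (hs : 1 / 2 < s) :
    Summable (fun l : ℕ →₀ ℤ => (2 : ℝ) ^ (Jnum l) * ((cSW σ s l) ^ 2)⁻¹) ∧
    ∑' l : ℕ →₀ ℤ, (2 : ℝ) ^ (Jnum l) * ((cSW σ s l) ^ 2)⁻¹ =
      ∏' j : ℕ, (1 + 2 * ((j : ℝ) + 1) ^ (-(2 * s)) *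
        ∑' k : {k : ℤ // k ≠ 0}, |2 * Real.pi * (k.1 : ℝ)| ^ (-(2 * σ))) := by
  set T := ∑' k : {k : ℤ // k ≠ 0}, |2 * Real.pi * (k.1 : ℝ)| ^ (-(2 * σ))
  have hT : HasSum (fun k : {k : ℤ // k ≠ 0} => |2 * Real.pi * (k.1 : ℝ)| ^ (-(2 * σ))) T :=
    ((summable_abs_two_pi_mul_int_rpow hσ).subtype _).hasSum
  have hsum := Finsupp.hasSum_prod_tprod_one_add
    (f := fun (j : ℕ) (k : ℤ) =>
      2 * ((j : ℝ) + 1) ^ (-(2 * s)) * |2 * Real.pi * (k : ℝ)| ^ (-(2 * σ)))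
    (b := fun j => 2 * ((j : ℝ) + 1) ^ (-(2 * s)) * T) (fun j k => by positivity)
    (fun j => hT.mul_left _)
    (((summable_nat_add_one_rpow (p := -(2 * s)) (by linarith)).mul_left 2).mul_right T)
  simp only [two_pow_Jnum_mul_inv_cSW_sq]
  exact ⟨hsum.summable, hsum.tsum_eq⟩
end
end
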